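/- Let A be an integral NDA and let (w, q_u, q_l) be a recoverable gap with respect to z such that gap_{q_u,q_l}(w) > M. Then A_[q_u→_f α](z) < ∞ and A_[q_l→_f α](z) = ∞, i.e., there is an accepting run of A on z starting in q_u but no accepting run of A on z starting in q_l. -/

import Mathlib

/-- A nondeterministic integral discounted-sum automaton (NDA) over alphabet `σ`
with state type `Q`. -/
structure NDA (σ : Type) (Q : Type) where
  init : Set Q
  acc : Set Q
  delta : Set (Q × σ × Q)
  val : Q × σ × Q → ℕ
  fval : Q → ℕ
  lam : ℕ
  one_lt_lam : 1 < lam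

namespace NDA

variable {σ Q : Type}

/-- The adjacency (transition) condition for a sequence of states along the word `w`. -/
def Steps (A : NDA σ Q) (w : List σ) (ρ : ℕ → Q) : Prop :=
  ∀ i : Fin w.length, (ρ (i : ℕ), w.get i, ρ ((i : ℕ) + 1)) ∈ A.delta

/-- A run of `A` on `w`: starts in an initial state and follows transitions. -/
def IsRun (A : NDA σ Q) (w : List σ) (ρ : ℕ → Q) : Prop :=
  ρ 0 ∈ A.init ∧ A.Steps w ρ

/-- A run of `A` on `w` starting in the state `q`. -/
def IsRunFrom (A : NDA σ Q) (q : Q) (w : List σ) (ρ : ℕ → Q) : Prop :=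
  ρ 0 = q ∧ A.Steps w ρ

/-- The discounted weight of the sequence of states `ρ` along the word `w`. -/
def runVal (A : NDA σ Q) (w : List σ) (ρ : ℕ → Q) : ℚ :=
  ∑ i : Fin w.length,
    ((A.lam : ℚ)⁻¹) ^ (i : ℕ) * (A.val (ρ (i : ℕ), w.get i, ρ ((i : ℕ) + 1)) : ℚ)

/-- `A_[P→P'](w)`: minimal weight of a run on `w` from `P` to `P'` (`⊤` if none). -/
noncomputable def minVal (A : NDA σ Q) (P P' : Set Q) (w : List σ) : EReal :=
  sInf {x : EReal | ∃ ρ : ℕ → Q, ρ 0 ∈ P ∧ A.Steps w ρ ∧ ρ w.length ∈ P' ∧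
    x = ((A.runVal w ρ : ℝ) : EReal)}

/-- `A_[P→_f P'](w)`: minimal weight including the final weight of an accepting
run on `w` from `P` ending in `P' ∩ α` (`⊤` if none). -/
noncomputable def minValF (A : NDA σ Q) (P P' : Set Q) (w : List σ) : EReal :=
  sInf {x : EReal | ∃ ρ : ℕ → Q, ρ 0 ∈ P ∧ A.Steps w ρ ∧ ρ w.length ∈ P' ∩ A.acc ∧
    x = (((A.runVal w ρ + ((A.lam : ℚ)⁻¹) ^ w.length * (A.fval (ρ w.length) : ℚ) : ℚ) : ℝ) : EReal)}

/-- `A*(w)`: the value of the word `w`. -/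
noncomputable def starVal (A : NDA σ Q) (w : List σ) : EReal :=
  A.minValF A.init Set.univ w

/-- `(w, qu, ql)` is a recoverable gap with respect to `z`. -/
def RecGap (A : NDA σ Q) (w z : List σ) (qu ql : Q) : Prop :=
  A.minVal A.init {ql} w ≤ A.minVal A.init {qu} w ∧
  A.minVal A.init {qu} w +
      ((((A.lam : ℝ)⁻¹) ^ w.length : ℝ) : EReal) * A.minValF {qu} Set.univ z
    = A.starVal (w ++ z) ∧
  A.starVal (w ++ z) < ⊤

/-- `gap_{qu,ql}(w) = λ^{|w|}·(A_[Q₀→qu](w) − A_[Q₀→ql](w))`: the size of a gap. -/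
noncomputable def gapSize (A : NDA σ Q) (w : List σ) (qu ql : Q) : EReal :=
  (((A.lam : ℝ) ^ w.length : ℝ) : EReal) *
    (A.minVal A.init {qu} w - A.minVal A.init {ql} w)

/-- The set of sizes of recoverable gaps of `A`. -/
def gapSizes (A : NDA σ Q) : Set EReal :=
  {g | ∃ w z qu ql, A.RecGap w z qu ql ∧ g = A.gapSize w qu ql}

/-- `A` is deterministic (a DDA). -/
def Deterministic (A : NDA σ Q) : Prop :=
  (∃! q, q ∈ A.init) ∧ ∀ p s, {q | (p, s, q) ∈ A.delta}.Subsingleton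

/-- `A` is determinizable: it has an equivalent DDA over the same alphabet with
the same discounting factor. -/
def Determinizable (A : NDA σ Q) : Prop :=
  ∃ (Q' : Type) (_ : Fintype Q') (D : NDA σ Q'),
    D.Deterministic ∧ D.lam = A.lam ∧ ∀ w : List σ, A.starVal w = D.starVal w

/-- `m_A`: the maximal transition weight or final weight of `A`. -/
noncomputable def mA (A : NDA σ Q) [Fintype σ] [Fintype Q] : ℕ :=
  max ((Set.toFinite A.delta).toFinset.sup A.val)
      ((Set.toFinite A.acc).toFinset.sup A.fval)

/-- `M = 2·(λ/(λ−1))·m_A`. -/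
noncomputable def M (A : NDA σ Q) [Fintype σ] [Fintype Q] : ℚ :=
  2 * ((A.lam : ℚ) / ((A.lam : ℚ) - 1)) * (A.mA : ℚ)

/-- `Γ` of the length-`i` prefix of a run on `w`: `λ^i` times its weight. -/
def gammaPfx (A : NDA σ Q) (w : List σ) (ρ : ℕ → Q) (i : ℕ) : ℚ :=
  (A.lam : ℚ) ^ i * A.runVal (w.take i) ρ

/-- `𝒩 = λ^{|Q|²·2^{|Q|²}}·((|Q|−2)·M) + M`. -/
noncomputable def calN (A : NDA σ Q) [Fintype σ] [Fintype Q] : ℚ :=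
  (A.lam : ℚ) ^ ((Fintype.card Q) ^ 2 * 2 ^ ((Fintype.card Q) ^ 2)) *
      (((Fintype.card Q : ℚ) - 2) * A.M) + A.M

/-- `C = (λ/(λ−1))·(𝒩·|Q| + 2·m_A)`. -/
noncomputable def calC (A : NDA σ Q) [Fintype σ] [Fintype Q] : ℚ :=
  ((A.lam : ℚ) / ((A.lam : ℚ) - 1)) * (A.calN * (Fintype.card Q : ℚ) + 2 * (A.mA : ℚ))

/-- `w` has the `n`-separation property with respect to `(U, L, qu, z)`. -/
def SepPropWith (A : NDA σ Q) (n : ℚ) (w : List σ) (U L : Set Q) (qu : Q) (z : List σ) : Prop :=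
  U ∪ L = Set.univ ∧ Disjoint U L ∧ U.Nonempty ∧ L.Nonempty ∧
  (∀ qu' ∈ U, ∀ ql ∈ L,
    (((A.lam : ℝ) ^ w.length : ℝ) : EReal) *
        (A.minVal A.init {qu'} w - A.minVal A.init {ql} w) > ((n : ℝ) : EReal)) ∧
  qu ∈ U ∧ ∀ ql ∈ L, A.RecGap w z qu ql

/-- `w` has the `n`-separation property. -/
def SepProp (A : NDA σ Q) (n : ℚ) (w : List σ) : Prop :=
  ∃ U L qu z, A.SepPropWith n w U L qu z

end NDA

/-!
Every accepting run on `z` weighs at most `M`, whatever state it starts in. If one started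
in `q_l`, prefixing it with a run reaching `q_l` on `w` would give
`A*(wz) ≤ A_[Q₀→q_l](w) + λ^{-|w|}·M`, while recoverability gives
`A_[Q₀→q_u](w) ≤ A*(wz)`; together these bound the gap by `M`.
Finiteness of `A_[q_u→_f α](z)` is forced by `A*(wz) < ∞`.
-/
namespace NDA

variable {σ Q : Type}

lemma sum_fin_inv_pow_le {K : Type*} [Field K] [LinearOrder K] [IsStrictOrderedRing K]
    {q : K} (hq : 1 < q) (n : ℕ) : ∑ i : Fin n, q⁻¹ ^ (i : ℕ) ≤ q / (q - 1) := by
  have hq0 : 0 < q := zero_lt_one.trans hq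
  calc ∑ i : Fin n, q⁻¹ ^ (i : ℕ) = ∑ i ∈ Finset.Ico 0 n, q⁻¹ ^ i := by
        rw [Fin.sum_univ_eq_sum_range (fun i => q⁻¹ ^ i), Finset.range_eq_Ico]
    _ ≤ q⁻¹ ^ 0 / (1 - q⁻¹) :=
        geom_sum_Ico_le_of_lt_one (by positivity) (inv_lt_one_of_one_lt₀ hq)
    _ = q / (q - 1) := by field_simp

lemma runVal_nonneg (A : NDA σ Q) (w : List σ) (ρ : ℕ → Q) : 0 ≤ A.runVal w ρ :=
  Finset.sum_nonneg fun _ _ => by positivity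

def accVal (A : NDA σ Q) (w : List σ) (ρ : ℕ → Q) : ℚ :=
  A.runVal w ρ + ((A.lam : ℚ)⁻¹) ^ w.length * (A.fval (ρ w.length) : ℚ)

lemma accVal_nonneg (A : NDA σ Q) (w : List σ) (ρ : ℕ → Q) : 0 ≤ A.accVal w ρ :=
  add_nonneg (A.runVal_nonneg w ρ) (by positivity)

lemma minVal_nonneg (A : NDA σ Q) (P P' : Set Q) (w : List σ) : 0 ≤ A.minVal P P' w :=
  le_sInf <| by
    rintro _ ⟨ρ, -, -, -, rfl⟩
    exact EReal.coe_nonneg.2 (by exact_mod_cast A.runVal_nonneg w ρ)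

lemma minValF_nonneg (A : NDA σ Q) (P P' : Set Q) (w : List σ) : 0 ≤ A.minValF P P' w :=
  le_sInf <| by
    rintro _ ⟨ρ, -, -, -, rfl⟩
    exact EReal.coe_nonneg.2 (by exact_mod_cast A.accVal_nonneg w ρ)

lemma exists_run_of_minValF_ne_top {A : NDA σ Q} {P P' : Set Q} {w : List σ}
    (h : A.minValF P P' w ≠ ⊤) :
    ∃ ρ : ℕ → Q, ρ 0 ∈ P ∧ A.Steps w ρ ∧ ρ w.length ∈ P' ∩ A.acc := by
  obtain ⟨_, ⟨ρ, hρ0, hρ, hend, -⟩, -⟩ := sInf_lt_iff.1 (lt_top_iff_ne_top.2 h)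
  exact ⟨ρ, hρ0, hρ, hend⟩

section Bounds

variable [Fintype σ] [Fintype Q] (A : NDA σ Q)

lemma val_le_mA {t : Q × σ × Q} (ht : t ∈ A.delta) : A.val t ≤ A.mA :=
  le_max_of_le_left (Finset.le_sup ((Set.Finite.mem_toFinset _).2 ht))

lemma fval_le_mA {q : Q} (hq : q ∈ A.acc) : A.fval q ≤ A.mA :=
  le_max_of_le_right (Finset.le_sup ((Set.Finite.mem_toFinset _).2 hq))

lemma runVal_le {w : List σ} {ρ : ℕ → Q} (hρ : A.Steps w ρ) :
    A.runVal w ρ ≤ (A.lam : ℚ) / ((A.lam : ℚ) - 1) * A.mA := by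
  have hlam : (1 : ℚ) < A.lam := by exact_mod_cast A.one_lt_lam
  calc A.runVal w ρ ≤ ∑ i : Fin w.length, ((A.lam : ℚ)⁻¹) ^ (i : ℕ) * A.mA :=
        Finset.sum_le_sum fun i _ =>
          mul_le_mul_of_nonneg_left (by exact_mod_cast A.val_le_mA (hρ i)) (by positivity)
    _ = (∑ i : Fin w.length, ((A.lam : ℚ)⁻¹) ^ (i : ℕ)) * A.mA := (Finset.sum_mul _ _ _).symm
    _ ≤ _ := mul_le_mul_of_nonneg_right (sum_fin_inv_pow_le hlam _) (by positivity)

lemma accVal_le_M {w : List σ} {ρ : ℕ → Q} (hρ : A.Steps w ρ) (hacc : ρ w.length ∈ A.acc) :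
    A.accVal w ρ ≤ A.M := by
  have hlam : (1 : ℚ) < A.lam := by exact_mod_cast A.one_lt_lam
  have hratio : 1 ≤ (A.lam : ℚ) / ((A.lam : ℚ) - 1) := by
    rw [one_le_div (by linarith)]; linarith
  have hfinal : ((A.lam : ℚ)⁻¹) ^ w.length * (A.fval (ρ w.length) : ℚ) ≤ A.mA :=
    calc _ ≤ 1 * (A.fval (ρ w.length) : ℚ) :=
          mul_le_mul_of_nonneg_right (pow_le_one₀ (by positivity) (inv_le_one_of_one_le₀ hlam.le))
            (by positivity)
      _ ≤ A.mA := by rw [one_mul]; exact_mod_cast A.fval_le_mA hacc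
  have hmA : (A.mA : ℚ) ≤ (A.lam : ℚ) / ((A.lam : ℚ) - 1) * A.mA :=
    le_mul_of_one_le_left (by positivity) hratio
  have hrun := A.runVal_le hρ
  unfold accVal M
  linarith

end Bounds

def appendRun (w : List σ) (ρ₁ ρ₂ : ℕ → Q) : ℕ → Q :=
  fun i => if i < w.length then ρ₁ i else ρ₂ (i - w.length)

lemma appendRun_of_le {w : List σ} {ρ₁ ρ₂ : ℕ → Q} (hmid : ρ₂ 0 = ρ₁ w.length) {i : ℕ}
    (hi : i ≤ w.length) : appendRun w ρ₁ ρ₂ i = ρ₁ i := by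
  rcases hi.lt_or_eq with h | rfl
  · simp [appendRun, h]
  · simp [appendRun, hmid]

@[simp]
lemma appendRun_add (w : List σ) (ρ₁ ρ₂ : ℕ → Q) (j : ℕ) :
    appendRun w ρ₁ ρ₂ (w.length + j) = ρ₂ j := by
  simp [appendRun]

lemma steps_append {A : NDA σ Q} {w z : List σ} {ρ₁ ρ₂ : ℕ → Q}
    (h₁ : A.Steps w ρ₁) (h₂ : A.Steps z ρ₂) (hmid : ρ₂ 0 = ρ₁ w.length) :
    A.Steps (w ++ z) (appendRun w ρ₁ ρ₂) := by
  rintro ⟨i, hi⟩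
  rcases lt_or_ge i w.length with h | h
  · simpa [appendRun_of_le hmid h.le, appendRun_of_le hmid h, List.getElem_append_left h]
      using h₁ ⟨i, h⟩
  · obtain ⟨j, rfl⟩ := Nat.exists_eq_add_of_le h
    have hj : j < z.length := by simp at hi; omega
    simpa [add_assoc] using h₂ ⟨j, hj⟩

lemma runVal_append (A : NDA σ Q) {w z : List σ} {ρ₁ ρ₂ : ℕ → Q}
    (hmid : ρ₂ 0 = ρ₁ w.length) :
    A.runVal (w ++ z) (appendRun w ρ₁ ρ₂)
      = A.runVal w ρ₁ + ((A.lam : ℚ)⁻¹) ^ w.length * A.runVal z ρ₂ := by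
  unfold runVal
  rw [← (finCongr (List.length_append (as := w) (bs := z)).symm).sum_comp, Fin.sum_univ_add,
    Finset.mul_sum]
  congr 1 <;> refine Finset.sum_congr rfl fun i _ => ?_
  · simp [appendRun_of_le hmid i.isLt.le, appendRun_of_le hmid i.isLt,
      List.getElem_append_left i.isLt]
  · simp [pow_add, mul_assoc, add_assoc]

lemma accVal_append (A : NDA σ Q) {w z : List σ} {ρ₁ ρ₂ : ℕ → Q}
    (hmid : ρ₂ 0 = ρ₁ w.length) :
    A.accVal (w ++ z) (appendRun w ρ₁ ρ₂)
      = A.runVal w ρ₁ + ((A.lam : ℚ)⁻¹) ^ w.length * A.accVal z ρ₂ := by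
  simp only [accVal, A.runVal_append hmid, List.length_append, appendRun_add]
  ring

lemma minValF_append_le {A : NDA σ Q} {P P' : Set Q} {w z : List σ} {ρ : ℕ → Q}
    (hρ : A.Steps z ρ) (hacc : ρ z.length ∈ P' ∩ A.acc) :
    A.minValF P P' (w ++ z)
      ≤ A.minVal P {ρ 0} w +
          ((((A.lam : ℝ)⁻¹) ^ w.length * (A.accVal z ρ : ℝ) : ℝ) : EReal) := by
  rw [← EReal.sub_le_iff_le_add (.inl (EReal.coe_ne_bot _)) (.inl (EReal.coe_ne_top _))]
  refine le_sInf ?_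
  rintro _ ⟨ρ₁, h0, h₁, hend, rfl⟩
  have hmid : ρ 0 = ρ₁ w.length := hend.symm
  rw [EReal.sub_le_iff_le_add (.inl (EReal.coe_ne_bot _)) (.inl (EReal.coe_ne_top _)),
    ← EReal.coe_add]
  refine sInf_le ⟨appendRun w ρ₁ ρ, by rwa [appendRun_of_le hmid (Nat.zero_le _)],
    steps_append h₁ hρ hmid, by simpa using hacc, ?_⟩
  change _ = ((A.accVal (w ++ z) (appendRun w ρ₁ ρ) : ℝ) : EReal)
  rw [A.accVal_append hmid]
  push_cast
  rfl

lemma gapSize_le_of_le_add [Fintype σ] [Fintype Q] (A : NDA σ Q) (w : List σ) (qu ql : Q)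
    (h : A.minVal A.init {qu} w
      ≤ A.minVal A.init {ql} w + ((((A.lam : ℝ)⁻¹) ^ w.length * A.M : ℝ) : EReal)) :
    A.gapSize w qu ql ≤ ((A.M : ℝ) : EReal) := by
  rw [add_comm,
    ← EReal.sub_le_iff_le_add (.inr (EReal.coe_ne_top _)) (.inr (EReal.coe_ne_bot _))] at h
  have hlam : (0 : ℝ) < A.lam := by exact_mod_cast zero_lt_one.trans A.one_lt_lam
  calc A.gapSize w qu ql
      ≤ (((A.lam : ℝ) ^ w.length : ℝ) : EReal) *
          ((((A.lam : ℝ)⁻¹) ^ w.length * A.M : ℝ) : EReal) :=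
        mul_le_mul_of_nonneg_left h (EReal.coe_nonneg.2 (by positivity))
    _ = ((A.M : ℝ) : EReal) := by
        rw [← EReal.coe_mul, ← mul_assoc, ← mul_pow, mul_inv_cancel₀ hlam.ne', one_pow, one_mul]

section RecGap

variable {A : NDA σ Q} {w z : List σ} {qu ql : Q}

lemma RecGap.minValF_lt_top (h : A.RecGap w z qu ql) : A.minValF {qu} Set.univ z < ⊤ := by
  obtain ⟨-, heq, hfin⟩ := h
  refine lt_top_iff_ne_top.2 fun htop => hfin.ne ?_
  have hlam : (1 : ℝ) < A.lam := by exact_mod_cast A.one_lt_lam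
  have hne_bot : A.minVal A.init {qu} w ≠ ⊥ :=
    ne_bot_of_le_ne_bot EReal.zero_ne_bot (A.minVal_nonneg _ _ _)
  rw [← heq, htop, EReal.coe_mul_top_of_pos (by positivity), EReal.add_top_of_ne_bot hne_bot]

lemma RecGap.minVal_le_starVal (h : A.RecGap w z qu ql) :
    A.minVal A.init {qu} w ≤ A.starVal (w ++ z) :=
  h.2.1 ▸ le_add_of_nonneg_right
    (EReal.mul_nonneg (EReal.coe_nonneg.2 (by positivity)) (A.minValF_nonneg _ _ _))

end RecGap

end NDA

/-- In a recoverable gap of size larger than `M`, the suffix `z` admits an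
accepting run from `q_u` but no accepting run from `q_l`. -/
theorem large_recoverable_gap_lower_run_dies {σ Q : Type} [Fintype σ] [Fintype Q]
    (A : NDA σ Q) (w z : List σ) (qu ql : Q)
    (hgap : A.RecGap w z qu ql)
    (hlarge : A.gapSize w qu ql > ((A.M : ℝ) : EReal)) :
    A.minValF {qu} Set.univ z < ⊤ ∧ A.minValF {ql} Set.univ z = ⊤ := by
  refine ⟨hgap.minValF_lt_top, ?_⟩
  by_contra hql
  refine hlarge.not_ge (A.gapSize_le_of_le_add w qu ql ?_)
  obtain ⟨ρ, rfl, hρ, hacc⟩ := NDA.exists_run_of_minValF_ne_top hql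
  have hbound : (A.accVal z ρ : ℝ) ≤ A.M := by exact_mod_cast A.accVal_le_M hρ hacc.2
  calc A.minVal A.init {qu} w ≤ A.starVal (w ++ z) := hgap.minVal_le_starVal
    _ ≤ _ := NDA.minValF_append_le hρ hacc
    _ ≤ _ := by gcongr
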